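/- Under the coupled Riccati relations, for each i ∈ {1,2} and every x ∈ ℝ^d, setting Ã_i := A − b^{−i} p_{−i}ᵀ, the equilibrium value satisfies the Bellman best-response identity xᵀK^i x = xᵀQ_i x + inf_{u∈ℝ} ( r u² + γ (Ã_i x + b^i u)ᵀ K^i (Ã_i x + b^i u) ), and the infimum is attained uniquely at u = −p_iᵀ x (the opposing player being held at its Nash feedback). -/

import Mathlib

open Matrix

noncomputable section

/-- The closed-loop matrix `F = A − b¹p₁ᵀ − b²p₂ᵀ` of the feedback Nash equilibrium. -/
def gameF {d : ℕ} (A : Matrix (Fin d) (Fin d) ℝ) (b p : Fin 2 → Fin d → ℝ) :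
    Matrix (Fin d) (Fin d) ℝ :=
  A - vecMulVec (b 0) (p 0) - vecMulVec (b 1) (p 1)

/-- The coupled Riccati relations of the two-player linear–quadratic dynamic game:
`γ (bⁱ)ᵀKⁱA = (r + γ(bⁱ)ᵀKⁱbⁱ) pᵢᵀ + γ(bⁱ)ᵀKⁱb⁻ⁱ p₋ᵢᵀ` and
`Kⁱ = γ FᵀKⁱF + r pᵢpᵢᵀ + Qᵢ`, with each `Kⁱ` symmetric positive semidefinite. -/
def coupledRiccati {d : ℕ} (A : Matrix (Fin d) (Fin d) ℝ) (b : Fin 2 → Fin d → ℝ)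
    (Q : Fin 2 → Matrix (Fin d) (Fin d) ℝ) (r γ : ℝ)
    (p : Fin 2 → Fin d → ℝ) (K : Fin 2 → Matrix (Fin d) (Fin d) ℝ) : Prop :=
  (∀ i, (K i).PosSemidef) ∧
  (∀ i j, j ≠ i →
    γ • Matrix.vecMul (Matrix.vecMul (b i) (K i)) A =
      (r + γ * (b i ⬝ᵥ (K i).mulVec (b i))) • p i +
        (γ * (b i ⬝ᵥ (K i).mulVec (b j))) • p j) ∧
  (∀ i, K i = γ • ((gameF A b p)ᵀ * K i * gameF A b p) + r • vecMulVec (p i) (p i) + Q i)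

/-!
With the opponent frozen at its feedback, player `i`'s one-step cost is a scalar quadratic in `u`
with leading coefficient `r + γ bᵢᵀKⁱbᵢ > 0`. The gain equation of the Riccati system says
precisely that its linear coefficient is `2 (r + γ bᵢᵀKⁱbᵢ) pᵢᵀx`, so the cost is a perfect
square centred at `u = −pᵢᵀx` plus a constant; the Lyapunov equation for `Kⁱ`, evaluated at `x`
with `F x = Ãᵢx − (pᵢᵀx) bᵢ`, identifies `xᵀKⁱx − xᵀQᵢx` with the cost at that minimiser.
-/

section QuadraticForm

variable {m n R : Type*} [Fintype m] [Fintype n] [CommRing R]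

lemma Matrix.IsSymm.dotProduct_mulVec_comm {K : Matrix n n R} (hK : K.IsSymm) (v w : n → R) :
    v ⬝ᵥ K *ᵥ w = w ⬝ᵥ K *ᵥ v := by
  conv_lhs => rw [← hK.eq]
  rw [dotProduct_mulVec, vecMul_transpose, dotProduct_comm]

lemma Matrix.IsSymm.dotProduct_mulVec_add_smul {K : Matrix n n R} (hK : K.IsSymm)
    (v w : n → R) (u : R) :
    (v + u • w) ⬝ᵥ K *ᵥ (v + u • w) =
      v ⬝ᵥ K *ᵥ v + 2 * u * (w ⬝ᵥ K *ᵥ v) + u ^ 2 * (w ⬝ᵥ K *ᵥ w) := by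
  simp only [mulVec_add, mulVec_smul, dotProduct_add, add_dotProduct, dotProduct_smul,
    smul_dotProduct, smul_eq_mul, hK.dotProduct_mulVec_comm v w]
  ring

lemma dotProduct_vecMulVec_self_mulVec (p x : n → R) :
    x ⬝ᵥ vecMulVec p p *ᵥ x = (p ⬝ᵥ x) ^ 2 := by
  rw [vecMulVec_mulVec, op_smul_eq_smul, dotProduct_smul, smul_eq_mul, dotProduct_comm, sq]

lemma dotProduct_transpose_mul_mul_mulVec (F : Matrix m n R) (K : Matrix m m R) (x : n → R) :
    x ⬝ᵥ (Fᵀ * K * F) *ᵥ x = F *ᵥ x ⬝ᵥ K *ᵥ (F *ᵥ x) := by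
  rw [← mulVec_mulVec, ← mulVec_mulVec, dotProduct_mulVec, vecMul_transpose]

end QuadraticForm

section LQCost

variable {n R : Type*} [Fintype n]

/-- Stage cost `r u²` plus discounted continuation value `γ yᵀKy` at the successor
`y = v + u w` reached when the player applies `u`. -/
def lqCost [CommRing R] (K : Matrix n n R) (r γ : R) (v w : n → R) (u : R) : R :=
  r * u ^ 2 + γ * ((v + u • w) ⬝ᵥ K *ᵥ (v + u • w))

lemma lqCost_eq_add_sq [CommRing R] {K : Matrix n n R} (hK : K.IsSymm) {r γ s : R}
    {v w : n → R} (hs : γ * (w ⬝ᵥ K *ᵥ v) = (r + γ * (w ⬝ᵥ K *ᵥ w)) * s) (u : R) :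
    lqCost K r γ v w u = (r + γ * (w ⬝ᵥ K *ᵥ w)) * (u + s) ^ 2 + lqCost K r γ v w (-s) := by
  simp only [lqCost, hK.dotProduct_mulVec_add_smul]
  linear_combination (2 * u + 2 * s) * hs

lemma lqCost_lt [CommRing R] [LinearOrder R] [IsStrictOrderedRing R] {K : Matrix n n R}
    (hK : K.IsSymm) {r γ s : R} {v w : n → R}
    (hs : γ * (w ⬝ᵥ K *ᵥ v) = (r + γ * (w ⬝ᵥ K *ᵥ w)) * s) (hc : 0 < r + γ * (w ⬝ᵥ K *ᵥ w))
    {u : R} (hu : u ≠ -s) : lqCost K r γ v w (-s) < lqCost K r γ v w u := by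
  have : u + s ≠ 0 := fun h => hu (eq_neg_of_add_eq_zero_left h)
  rw [lqCost_eq_add_sq hK hs u]
  exact lt_add_of_pos_left _ (by positivity)

lemma lqCost_iInf {K : Matrix n n ℝ} (hK : K.IsSymm) {r γ s : ℝ} {v w : n → ℝ}
    (hs : γ * (w ⬝ᵥ K *ᵥ v) = (r + γ * (w ⬝ᵥ K *ᵥ w)) * s) (hc : 0 < r + γ * (w ⬝ᵥ K *ᵥ w)) :
    ⨅ u, lqCost K r γ v w u = lqCost K r γ v w (-s) := by
  refine IsLeast.csInf_eq ⟨Set.mem_range_self _, Set.forall_mem_range.2 fun u => ?_⟩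
  obtain rfl | hu := eq_or_ne u (-s)
  · exact le_rfl
  · exact (lqCost_lt hK hs hc hu).le

end LQCost

section Game

variable {d : ℕ} {A : Matrix (Fin d) (Fin d) ℝ} {b : Fin 2 → Fin d → ℝ}
  {Q : Fin 2 → Matrix (Fin d) (Fin d) ℝ} {r γ : ℝ} {p : Fin 2 → Fin d → ℝ}
  {K : Fin 2 → Matrix (Fin d) (Fin d) ℝ} {i j : Fin 2}

lemma gameF_eq_sub_sub (hji : j ≠ i) :
    gameF A b p = A - vecMulVec (b j) (p j) - vecMulVec (b i) (p i) := by
  fin_cases i <;> fin_cases j <;> simp_all [gameF, sub_right_comm]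

lemma coupledRiccati.gain_eq (hcr : coupledRiccati A b Q r γ p K) (hji : j ≠ i) (x : Fin d → ℝ) :
    γ * (b i ⬝ᵥ K i *ᵥ ((A - vecMulVec (b j) (p j)) *ᵥ x)) =
      (r + γ * (b i ⬝ᵥ K i *ᵥ b i)) * (p i ⬝ᵥ x) := by
  have h := congrArg (· ⬝ᵥ x) (hcr.2.1 i j hji)
  simp only [smul_dotProduct, add_dotProduct, smul_eq_mul, ← dotProduct_mulVec] at h
  rw [sub_mulVec, vecMulVec_mulVec, op_smul_eq_smul, mulVec_sub, mulVec_smul, dotProduct_sub,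
    dotProduct_smul, smul_eq_mul]
  linear_combination h

lemma coupledRiccati.value_eq_lqCost (hcr : coupledRiccati A b Q r γ p K) (hji : j ≠ i)
    (x : Fin d → ℝ) :
    x ⬝ᵥ K i *ᵥ x = x ⬝ᵥ Q i *ᵥ x +
      lqCost (K i) r γ ((A - vecMulVec (b j) (p j)) *ᵥ x) (b i) (-(p i ⬝ᵥ x)) := by
  have hFx : gameF A b p *ᵥ x = (A - vecMulVec (b j) (p j)) *ᵥ x + (-(p i ⬝ᵥ x)) • b i := by
    rw [gameF_eq_sub_sub hji, sub_mulVec _ (vecMulVec (b i) (p i)), vecMulVec_mulVec,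
      op_smul_eq_smul, sub_eq_add_neg, neg_smul]
  conv_lhs => rw [hcr.2.2 i]
  rw [add_mulVec, add_mulVec, dotProduct_add, dotProduct_add, smul_mulVec, smul_mulVec,
    dotProduct_smul, dotProduct_smul, dotProduct_transpose_mul_mul_mulVec, hFx,
    dotProduct_vecMulVec_self_mulVec, lqCost]
  simp only [smul_eq_mul, neg_sq]
  ring

end Game

theorem bellman_best_response_general
    (d : ℕ)
    (A : Matrix (Fin d) (Fin d) ℝ) (b : Fin 2 → Fin d → ℝ)
    (Q : Fin 2 → Matrix (Fin d) (Fin d) ℝ)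
    (r : ℝ) (hr : 0 < r)
    (γ : ℝ) (hγ : γ ∈ Set.Ioo (0 : ℝ) 1)
    (p : Fin 2 → Fin d → ℝ) (K : Fin 2 → Matrix (Fin d) (Fin d) ℝ)
    (hcr : coupledRiccati A b Q r γ p K) :
    ∀ i j : Fin 2, j ≠ i → ∀ x : Fin d → ℝ,
      (x ⬝ᵥ (K i).mulVec x =
        x ⬝ᵥ (Q i).mulVec x +
          ⨅ u : ℝ, (r * u ^ 2 +
            γ * (((A - vecMulVec (b j) (p j)).mulVec x + u • b i) ⬝ᵥ
              (K i).mulVec ((A - vecMulVec (b j) (p j)).mulVec x + u • b i)))) ∧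
      (r * (-(p i ⬝ᵥ x)) ^ 2 +
          γ * (((A - vecMulVec (b j) (p j)).mulVec x + (-(p i ⬝ᵥ x)) • b i) ⬝ᵥ
            (K i).mulVec ((A - vecMulVec (b j) (p j)).mulVec x + (-(p i ⬝ᵥ x)) • b i)) =
        ⨅ u : ℝ, (r * u ^ 2 +
          γ * (((A - vecMulVec (b j) (p j)).mulVec x + u • b i) ⬝ᵥ
            (K i).mulVec ((A - vecMulVec (b j) (p j)).mulVec x + u • b i)))) ∧
      (∀ u : ℝ, u ≠ -(p i ⬝ᵥ x) →
        r * (-(p i ⬝ᵥ x)) ^ 2 +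
            γ * (((A - vecMulVec (b j) (p j)).mulVec x + (-(p i ⬝ᵥ x)) • b i) ⬝ᵥ
              (K i).mulVec ((A - vecMulVec (b j) (p j)).mulVec x + (-(p i ⬝ᵥ x)) • b i)) <
          r * u ^ 2 +
            γ * (((A - vecMulVec (b j) (p j)).mulVec x + u • b i) ⬝ᵥ
              (K i).mulVec ((A - vecMulVec (b j) (p j)).mulVec x + u • b i))) := by
  intro i j hji x
  have hK : (K i).IsSymm := isHermitian_iff_isSymm.1 (hcr.1 i).isHermitian
  have hgain := hcr.gain_eq hji x
  have hbKb : 0 ≤ b i ⬝ᵥ K i *ᵥ b i := by simpa using (hcr.1 i).dotProduct_mulVec_nonneg (b i)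
  have hc : 0 < r + γ * (b i ⬝ᵥ K i *ᵥ b i) :=
    add_pos_of_pos_of_nonneg hr (mul_nonneg hγ.1.le hbKb)
  have hinf := lqCost_iInf hK hgain hc
  exact ⟨(hcr.value_eq_lqCost hji x).trans (congrArg _ hinf.symm), hinf.symm,
    fun u hu => lqCost_lt hK hgain hc hu⟩

/-- Bellman best-response correspondence at the Nash equilibrium: with the other player held at
its Nash feedback and `Ãᵢ = A − b⁻ⁱp₋ᵢᵀ`,
`xᵀKⁱx = xᵀQᵢx + inf_u ( r u² + γ(Ãᵢx + bⁱu)ᵀKⁱ(Ãᵢx + bⁱu) )`, the infimum being attained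
uniquely at `u = −pᵢᵀx`. -/
theorem bellman_best_response
    (d : ℕ) (hd : 1 ≤ d)
    (A : Matrix (Fin d) (Fin d) ℝ) (b : Fin 2 → Fin d → ℝ)
    (Q : Fin 2 → Matrix (Fin d) (Fin d) ℝ) (hQ : ∀ i, (Q i).PosSemidef)
    (r : ℝ) (hr : 0 < r)
    (γ : ℝ) (hγ : γ ∈ Set.Ioo (0 : ℝ) 1)
    (p : Fin 2 → Fin d → ℝ) (K : Fin 2 → Matrix (Fin d) (Fin d) ℝ)
    (hcr : coupledRiccati A b Q r γ p K) :
    ∀ i j : Fin 2, j ≠ i → ∀ x : Fin d → ℝ,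
      (x ⬝ᵥ (K i).mulVec x =
        x ⬝ᵥ (Q i).mulVec x +
          ⨅ u : ℝ, (r * u ^ 2 +
            γ * (((A - vecMulVec (b j) (p j)).mulVec x + u • b i) ⬝ᵥ
              (K i).mulVec ((A - vecMulVec (b j) (p j)).mulVec x + u • b i)))) ∧
      (r * (-(p i ⬝ᵥ x)) ^ 2 +
          γ * (((A - vecMulVec (b j) (p j)).mulVec x + (-(p i ⬝ᵥ x)) • b i) ⬝ᵥ
            (K i).mulVec ((A - vecMulVec (b j) (p j)).mulVec x + (-(p i ⬝ᵥ x)) • b i)) =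
        ⨅ u : ℝ, (r * u ^ 2 +
          γ * (((A - vecMulVec (b j) (p j)).mulVec x + u • b i) ⬝ᵥ
            (K i).mulVec ((A - vecMulVec (b j) (p j)).mulVec x + u • b i)))) ∧
      (∀ u : ℝ, u ≠ -(p i ⬝ᵥ x) →
        r * (-(p i ⬝ᵥ x)) ^ 2 +
            γ * (((A - vecMulVec (b j) (p j)).mulVec x + (-(p i ⬝ᵥ x)) • b i) ⬝ᵥ
              (K i).mulVec ((A - vecMulVec (b j) (p j)).mulVec x + (-(p i ⬝ᵥ x)) • b i)) <
          r * u ^ 2 +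
            γ * (((A - vecMulVec (b j) (p j)).mulVec x + u • b i) ⬝ᵥ
              (K i).mulVec ((A - vecMulVec (b j) (p j)).mulVec x + u • b i))) :=
  bellman_best_response_general d A b Q r hr γ hγ p K hcr

end
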